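/- For all real a, b and all positive reals s, t, r, the following inequality holds: a²[∂₁θ(s,t)(r−s) + ∂₁θ(t,s)(s−t) + 2θ(t,s)] + 2ab[θ(s,t) + θ(s,r)] + b²[∂₁θ(s,r)(t−s) + ∂₁θ(r,s)(s−r) + 2θ(r,s)] ≥ 0. -/

import Mathlib

/-!
For fixed `α ∈ [0, 1]` the weighted geometric mean `(x, y) ↦ x ^ α * y ^ (1 - α)` is concave on
the positive quadrant (weighted AM-GM), so it lies below its tangent plane at `(s, t)`. Integrating
over `α` gives the tangent inequality
`θ(r, s) ≤ θ(s, t) + ∂₁θ(s, t) (r - s) + ∂₂θ(s, t) (s - t)`, where `∂₂θ(s, t) = ∂₁θ(t, s)` by the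
symmetry of `θ`. Hence both diagonal coefficients of the quadratic form are at least
`C = θ(t, s) + θ(r, s)`, which is also the off-diagonal coefficient, and the form dominates
`(a + b)² C ≥ 0`.
-/

noncomputable def logMean (s t : ℝ) : ℝ := ∫ a in (0:ℝ)..1, s ^ a * t ^ (1 - a)

noncomputable def d1θ (s t : ℝ) : ℝ := deriv (fun u => logMean u t) s

open Real intervalIntegral MeasureTheory

theorem rpow_le_one_add {y β : ℝ} (hy : 0 ≤ y) (hβ₀ : 0 ≤ β) (hβ₁ : β ≤ 1) : y ^ β ≤ 1 + y := by
  have := geom_mean_le_arith_mean2_weighted hβ₀ (sub_nonneg.2 hβ₁) hy zero_le_one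
    (add_sub_cancel β 1)
  rw [one_rpow, mul_one] at this
  nlinarith

theorem rpow_mul_rpow_le_tangent {α x y x' y' : ℝ} (hα₀ : 0 ≤ α) (hα₁ : α ≤ 1)
    (hx : 0 < x) (hy : 0 < y) (hx' : 0 ≤ x') (hy' : 0 ≤ y') :
    x' ^ α * y' ^ (1 - α) ≤ x ^ α * y ^ (1 - α) + α * x ^ (α - 1) * y ^ (1 - α) * (x' - x)
      + (1 - α) * x ^ α * y ^ (-α) * (y' - y) := by
  have amgm := geom_mean_le_arith_mean2_weighted hα₀ (sub_nonneg.2 hα₁) (div_nonneg hx' hx.le)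
    (div_nonneg hy' hy.le) (add_sub_cancel α 1)
  rw [div_rpow hx' hx.le, div_rpow hy' hy.le] at amgm
  have hy_neg : y ^ (-α) = y ^ (1 - α) / y := by
    rw [← rpow_sub_one hy.ne']; ring_nf
  calc x' ^ α * y' ^ (1 - α)
      = x' ^ α / x ^ α * (y' ^ (1 - α) / y ^ (1 - α)) * (x ^ α * y ^ (1 - α)) := by
        field_simp
    _ ≤ (α * (x' / x) + (1 - α) * (y' / y)) * (x ^ α * y ^ (1 - α)) := by gcongr
    _ = _ := by
        rw [rpow_sub_one hx.ne', hy_neg]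
        field_simp
        ring

theorem logMean_comm (s t : ℝ) : logMean s t = logMean t s := by
  simpa [logMean, mul_comm] using
    integral_comp_sub_left (a := 0) (b := 1) (fun α => t ^ α * s ^ (1 - α)) (1 : ℝ)

theorem logMean_nonneg {s t : ℝ} (hs : 0 ≤ s) (ht : 0 ≤ t) : 0 ≤ logMean s t :=
  integral_nonneg zero_le_one fun _ _ => by positivity

theorem hasDerivAt_logMean {s t : ℝ} (hs : 0 < s) (ht : 0 < t) :
    HasDerivAt (fun u => logMean u t) (∫ α in (0:ℝ)..1, α * s ^ (α - 1) * t ^ (1 - α)) s := by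
  have hball : ∀ x ∈ Metric.ball s (s / 2), s / 2 < x := fun x hx => by
    rw [Metric.mem_ball, Real.dist_eq, abs_sub_lt_iff] at hx; linarith
  refine (hasDerivAt_integral_of_dominated_loc_of_deriv_le (μ := volume)
    (F := fun x α => x ^ α * t ^ (1 - α)) (F' := fun x α => α * x ^ (α - 1) * t ^ (1 - α))
    (bound := fun _ => 1 + 2 * t / s)
    (Metric.ball_mem_nhds s (half_pos hs)) ?_ ?_ ?_ ?_ intervalIntegrable_const ?_).2
  · filter_upwards [eventually_gt_nhds hs] with x hx
    exact (by fun_prop (disch := positivity) :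
      Continuous fun α : ℝ => x ^ α * t ^ (1 - α)).aestronglyMeasurable
  · exact (by fun_prop (disch := positivity) :
      Continuous fun α : ℝ => s ^ α * t ^ (1 - α)).intervalIntegrable 0 1
  · exact (by fun_prop (disch := positivity) :
      Continuous fun α : ℝ => α * s ^ (α - 1) * t ^ (1 - α)).aestronglyMeasurable
  · refine ae_of_all _ fun α hα x hx => ?_
    obtain ⟨hα₀, hα₁⟩ : 0 < α ∧ α ≤ 1 := by rwa [Set.uIoc_of_le zero_le_one] at hα
    have hx₀ := hball x hx
    have hx : 0 < x := by linarith
    have hfactor : x ^ (α - 1) * t ^ (1 - α) = (t / x) ^ (1 - α) := by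
      rw [div_rpow ht.le hx.le, div_eq_mul_inv, ← rpow_neg hx.le, neg_sub, mul_comm]
    have htx : t / x ≤ 2 * t / s := by
      rw [div_le_div_iff₀ hx hs]; nlinarith
    rw [norm_of_nonneg (by positivity), mul_assoc, hfactor]
    calc α * (t / x) ^ (1 - α) ≤ 1 * (1 + t / x) := by
          gcongr
          exact rpow_le_one_add (by positivity) (by linarith) (by linarith)
      _ ≤ 1 + 2 * t / s := by linarith
  · refine ae_of_all _ fun α _ x hx => ?_
    exact (hasDerivAt_rpow_const (Or.inl (by linarith [hball x hx]))).mul_const _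

theorem d1θ_eq_integral {s t : ℝ} (hs : 0 < s) (ht : 0 < t) :
    d1θ s t = ∫ α in (0:ℝ)..1, α * s ^ (α - 1) * t ^ (1 - α) :=
  (hasDerivAt_logMean hs ht).deriv

theorem d1θ_swap_eq_integral {s t : ℝ} (hs : 0 < s) (ht : 0 < t) :
    d1θ t s = ∫ α in (0:ℝ)..1, (1 - α) * s ^ α * t ^ (-α) := by
  rw [d1θ_eq_integral ht hs]
  simpa [mul_right_comm] using
    (integral_comp_sub_left (a := 0) (b := 1)
      (fun α => α * t ^ (α - 1) * s ^ (1 - α)) (1 : ℝ)).symm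

theorem logMean_le_tangent {s t r : ℝ} (hs : 0 < s) (ht : 0 < t) (hr : 0 < r) :
    logMean r s ≤ logMean s t + d1θ s t * (r - s) + d1θ t s * (s - t) := by
  rw [d1θ_eq_integral hs ht, d1θ_swap_eq_integral hs ht, logMean, logMean,
    ← intervalIntegral.integral_mul_const, ← intervalIntegral.integral_mul_const,
    ← intervalIntegral.integral_add, ← intervalIntegral.integral_add]
  refine integral_mono_on zero_le_one ?_ ?_ fun α hα =>
    rpow_mul_rpow_le_tangent hα.1 hα.2 hs ht hr.le hs.le
  all_goals exact Continuous.intervalIntegrable (by fun_prop (disch := positivity)) 0 1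

theorem quadratic_nonneg_of_off_diag_le_diag {A B C : ℝ} (a b : ℝ) (hC : 0 ≤ C) (hA : C ≤ A)
    (hB : C ≤ B) : 0 ≤ a ^ 2 * A + 2 * a * b * C + b ^ 2 * B := by
  nlinarith [mul_le_mul_of_nonneg_left hA (sq_nonneg a),
    mul_le_mul_of_nonneg_left hB (sq_nonneg b), mul_nonneg (sq_nonneg (a + b)) hC]

/-- The key pointwise estimate underlying the perturbative Ricci bound. -/
theorem pointwise_quadratic_form_nonneg (a b s t r : ℝ)
    (hs : 0 < s) (ht : 0 < t) (hr : 0 < r) :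
    a ^ 2 * (d1θ s t * (r - s) + d1θ t s * (s - t) + 2 * logMean t s)
      + 2 * a * b * (logMean s t + logMean s r)
      + b ^ 2 * (d1θ s r * (t - s) + d1θ r s * (s - r) + 2 * logMean r s) ≥ 0 := by
  rw [logMean_comm s t, logMean_comm s r]
  refine quadratic_nonneg_of_off_diag_le_diag a b
    (add_nonneg (logMean_nonneg ht.le hs.le) (logMean_nonneg hr.le hs.le)) ?_ ?_
  · linarith [logMean_le_tangent hs ht hr, logMean_comm s t]
  · linarith [logMean_le_tangent hs hr ht, logMean_comm s r]
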